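/- For ρ ∈ (1,2) and λ > 0, the function s(t) = E_ρ(−λ t^ρ), where E_ρ is the one-parameter Mittag-Leffler function, satisfies s(0) = 1 and the Volterra equation s'(t) + (λ/Γ(ρ−1)) ∫₀ᵗ (t−τ)^{ρ−2} s(τ) dτ = 0 for t > 0. -/

import Mathlib

open MeasureTheory

/-- The one-parameter Mittag-Leffler function `E_ρ(z) = Σ_k z^k/Γ(ρk+1)`. -/
noncomputable def mittagLeffler (ρ z : ℝ) : ℝ :=
  ∑' k : ℕ, z ^ k / Real.Gamma (ρ * k + 1)

/-!
With `c = -λ`, the function `s(t) = E_ρ(c t^ρ)` is a series in `t^ρ` that may be differentiated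
termwise: `E_ρ' = E_{ρ,ρ} / ρ`, hence `s'(t) = c t^(ρ-1) E_{ρ,ρ}(c t^ρ)`. On the other side, a Beta
integral gives `∫₀ᵗ (t-τ)^(α-1) τ^(ρk) dτ = Γ(α) Γ(ρk+1) t^(ρk+α) / Γ(ρk+α+1)`, so integrating the
series against the kernel term by term yields `Γ(α) t^α E_{ρ,α+1}(c t^ρ)`. For `α = ρ - 1` the two
sides agree up to the factor `c / Γ(ρ - 1)`.
-/

open Real Set

/-- The two-parameter Mittag-Leffler function `E_{ρ,β}`. -/
noncomputable def mittagLeffler₂ (ρ β z : ℝ) : ℝ :=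
  ∑' k : ℕ, z ^ k / Gamma (ρ * k + β)

theorem mittagLeffler_zero (ρ : ℝ) : mittagLeffler ρ 0 = 1 := by
  rw [mittagLeffler, tsum_eq_single 0 fun k hk => by rw [zero_pow hk, zero_div]]
  simp

theorem mul_Gamma_le_Gamma_add {x ρ : ℝ} (hx : 2 ≤ x) (hρ : 1 ≤ ρ) :
    x * Gamma x ≤ Gamma (x + ρ) := by
  rw [← Gamma_add_one (by linarith)]
  exact Gamma_strictMonoOn_Ici.monotoneOn (by simp only [mem_Ici]; linarith)
    (by simp only [mem_Ici]; linarith) (by linarith)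

theorem summable_pow_div_Gamma_mul_add {ρ β : ℝ} (hρ : 1 ≤ ρ) (hβ : 0 < β) (z : ℝ) :
    Summable fun k : ℕ => z ^ k / Gamma (ρ * k + β) := by
  refine summable_of_ratio_norm_eventually_le (r := 1 / 2) (by norm_num) ?_
  obtain ⟨N, hN⟩ := exists_nat_ge (max 2 (2 * ‖z‖))
  filter_upwards [Filter.eventually_ge_atTop N] with k hk
  set x := ρ * k + β
  have hNx : (N : ℝ) ≤ x := by
    have : (N : ℝ) ≤ k := by exact_mod_cast hk
    nlinarith [(k.cast_nonneg : (0 : ℝ) ≤ k)]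
  have hx2 : 2 ≤ x := by linarith [le_max_left 2 (2 * ‖z‖)]
  have hxz : 2 * ‖z‖ ≤ x := by linarith [le_max_right 2 (2 * ‖z‖)]
  have hΓ : 0 < Gamma x := Gamma_pos_of_pos (by linarith)
  have hsucc : ρ * (k + 1 : ℕ) + β = x + ρ := by push_cast; ring
  rw [hsucc, norm_div, norm_div, norm_pow, norm_pow, norm_of_nonneg hΓ.le,
    norm_of_nonneg (Gamma_pos_of_pos (by linarith)).le, pow_succ]
  calc ‖z‖ ^ k * ‖z‖ / Gamma (x + ρ) ≤ ‖z‖ ^ k * ‖z‖ / (x * Gamma x) := by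
        gcongr
        exact mul_Gamma_le_Gamma_add hx2 hρ
    _ = ‖z‖ / x * (‖z‖ ^ k / Gamma x) := by field_simp
    _ ≤ 1 / 2 * (‖z‖ ^ k / Gamma x) := by
        refine mul_le_mul_of_nonneg_right ?_ (by positivity)
        rw [div_le_iff₀ (by linarith)]
        linarith

theorem succ_mul_pow_div_Gamma {ρ : ℝ} (hρ : 0 < ρ) (y : ℝ) (k : ℕ) :
    ((k + 1 : ℕ) : ℝ) * y ^ k / Gamma (ρ * (k + 1 : ℕ) + 1) = y ^ k / Gamma (ρ * k + ρ) / ρ := by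
  have hpos : 0 < ρ * (k + 1 : ℕ) := by positivity
  have hΓ : Gamma (ρ * k + ρ) ≠ 0 := (Gamma_pos_of_pos (by positivity)).ne'
  rw [Gamma_add_one hpos.ne']
  push_cast
  rw [show ρ * (k + 1) = ρ * k + ρ by ring]
  field_simp

theorem hasDerivAt_mittagLeffler {ρ : ℝ} (hρ : 1 ≤ ρ) (z : ℝ) :
    HasDerivAt (mittagLeffler ρ) (mittagLeffler₂ ρ ρ z / ρ) z := by
  have hρ0 : 0 < ρ := by linarith
  set R := |z| + 1
  have hz : z ∈ Ioo (-R) R := abs_lt.mp (by linarith)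
  have hterm (k : ℕ) (y : ℝ) : HasDerivAt (fun y => y ^ k / Gamma (ρ * k + 1))
      (k * y ^ (k - 1) / Gamma (ρ * k + 1)) y :=
    (hasDerivAt_pow k y).div_const _
  have hbound (k : ℕ) (y : ℝ) (hy : y ∈ Ioo (-R) R) :
      ‖k * y ^ (k - 1) / Gamma (ρ * k + 1)‖ ≤ k * R ^ (k - 1) / Gamma (ρ * k + 1) := by
    have hΓ : 0 < Gamma (ρ * k + 1) := Gamma_pos_of_pos (by positivity)
    rw [norm_div, norm_mul, norm_pow, norm_of_nonneg hΓ.le, Real.norm_natCast, Real.norm_eq_abs]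
    gcongr
    exact abs_le.mpr ⟨hy.1.le, hy.2.le⟩
  have hsum : Summable fun k : ℕ => k * R ^ (k - 1) / Gamma (ρ * k + 1) := by
    rw [← summable_nat_add_iff 1]
    simpa only [Nat.add_sub_cancel, succ_mul_pow_div_Gamma hρ0] using
      (summable_pow_div_Gamma_mul_add hρ hρ0 R).div_const ρ
  have hD := hasDerivAt_tsum_of_isPreconnected hsum isOpen_Ioo isPreconnected_Ioo
    (fun k y _ => hterm k y) hbound hz (summable_pow_div_Gamma_mul_add hρ one_pos z) hz
  have hderivSum := Summable.of_norm_bounded hsum fun k => hbound k z hz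
  rw [hderivSum.tsum_eq_zero_add] at hD
  simp only [Nat.add_sub_cancel, succ_mul_pow_div_Gamma hρ0, CharP.cast_eq_zero, zero_mul,
    zero_div, zero_add, tsum_div_const] at hD
  exact hD

theorem hasDerivAt_mittagLeffler_mul_rpow {ρ : ℝ} (hρ : 1 ≤ ρ) (c t : ℝ) :
    HasDerivAt (fun t => mittagLeffler ρ (c * t ^ ρ))
      (c * t ^ (ρ - 1) * mittagLeffler₂ ρ ρ (c * t ^ ρ)) t := by
  have h := (hasDerivAt_mittagLeffler hρ (c * t ^ ρ)).comp t
    ((hasDerivAt_rpow_const (Or.inr hρ)).const_mul c)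
  have hρ0 : ρ ≠ 0 := by linarith
  exact h.congr_deriv (by field_simp)

theorem integral_rpow_mul_sub_rpow {a b t : ℝ} (ha : 0 < a) (hb : 0 < b) (ht : 0 < t) :
    ∫ τ in (0 : ℝ)..t, τ ^ (a - 1) * (t - τ) ^ (b - 1)
      = t ^ (a + b - 1) * (Gamma a * Gamma b / Gamma (a + b)) := by
  have h := Complex.betaIntegral_scaled a b ht
  rw [Complex.betaIntegral_eq_Gamma_mul_div _ _ (by simpa) (by simpa)] at h
  apply Complex.ofReal_injective
  rw [← intervalIntegral.integral_ofReal]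
  convert h using 1
  · refine intervalIntegral.integral_congr fun τ hτ => ?_
    rw [uIcc_of_le ht.le] at hτ
    push_cast [Complex.ofReal_cpow hτ.1, Complex.ofReal_cpow (sub_nonneg.mpr hτ.2)]
    rfl
  · push_cast [Complex.ofReal_cpow ht.le, ← Complex.Gamma_ofReal]
    rfl

theorem integral_sub_rpow_mul_pow_div_Gamma {ρ α t : ℝ} (hρ : 0 ≤ ρ) (hα : 0 < α) (ht : 0 < t)
    (c : ℝ) (k : ℕ) :
    ∫ τ in (0 : ℝ)..t, (t - τ) ^ (α - 1) * ((c * τ ^ ρ) ^ k / Gamma (ρ * k + 1))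
      = Gamma α * t ^ α * ((c * t ^ ρ) ^ k / Gamma (ρ * k + (α + 1))) := by
  have hΓ : Gamma (ρ * k + 1) ≠ 0 := (Gamma_pos_of_pos (by positivity)).ne'
  have hbeta := integral_rpow_mul_sub_rpow (a := ρ * k + 1) (by positivity) hα ht
  rw [add_sub_cancel_right, show ρ * k + 1 + α - 1 = α + ρ * k by ring,
    show ρ * k + 1 + α = ρ * k + (α + 1) by ring] at hbeta
  have hpow : EqOn (fun τ => (t - τ) ^ (α - 1) * ((c * τ ^ ρ) ^ k / Gamma (ρ * k + 1)))
      (fun τ => c ^ k / Gamma (ρ * k + 1) * (τ ^ (ρ * k) * (t - τ) ^ (α - 1))) (uIcc 0 t) := by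
    intro τ hτ
    rw [uIcc_of_le ht.le] at hτ
    simp only [mul_pow, ← rpow_natCast, ← rpow_mul hτ.1]
    ring
  rw [intervalIntegral.integral_congr hpow, intervalIntegral.integral_const_mul, hbeta,
    rpow_add ht, rpow_mul ht.le, rpow_natCast, mul_pow]
  field_simp

theorem integral_sub_rpow_mul_mittagLeffler {ρ α t : ℝ} (hρ : 1 ≤ ρ) (hα : 0 < α) (ht : 0 < t)
    (c : ℝ) :
    ∫ τ in (0 : ℝ)..t, (t - τ) ^ (α - 1) * mittagLeffler ρ (c * τ ^ ρ)
      = Gamma α * t ^ α * mittagLeffler₂ ρ (α + 1) (c * t ^ ρ) := by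
  have hρ0 : 0 ≤ ρ := by linarith
  set g : ℝ → ℕ → ℝ → ℝ := fun c k τ => (t - τ) ^ (α - 1) * ((c * τ ^ ρ) ^ k / Gamma (ρ * k + 1))
  have hint (k : ℕ) : IntegrableOn (g c k) (Ioc 0 t) := by
    rw [← intervalIntegrable_iff_integrableOn_Ioc_of_le ht.le]
    refine IntervalIntegrable.mul_continuousOn ?_
      ((continuous_const.mul (continuous_rpow_const hρ0)).pow k |>.div_const _).continuousOn
    simpa using ((intervalIntegral.intervalIntegrable_rpow' (a := 0) (b := t) (r := α - 1)
      (by linarith)).comp_sub_left t).symm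
  -- The norms of the terms for `c` are the terms for `|c|`, so the series is absolutely integrable.
  have hnorm (k : ℕ) : EqOn (fun τ => ‖g c k τ‖) (g |c| k) (Ioc 0 t) := fun τ hτ => by
    have hΓ : 0 ≤ Gamma (ρ * k + 1) := (Gamma_pos_of_pos (by positivity)).le
    simp only [g, norm_mul, norm_div, norm_pow, Real.norm_eq_abs, abs_of_nonneg hΓ,
      abs_of_nonneg (rpow_nonneg hτ.1.le ρ), abs_of_nonneg (rpow_nonneg (sub_nonneg.2 hτ.2) _)]
  have hsum : Summable fun k => ∫ τ in Ioc 0 t, ‖g c k τ‖ := by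
    simp only [setIntegral_congr_fun measurableSet_Ioc (hnorm _), g,
      ← intervalIntegral.integral_of_le ht.le,
      integral_sub_rpow_mul_pow_div_Gamma hρ0 hα ht]
    exact (summable_pow_div_Gamma_mul_add hρ (by positivity : (0:ℝ) < α + 1) _).mul_left _
  calc ∫ τ in (0 : ℝ)..t, (t - τ) ^ (α - 1) * mittagLeffler ρ (c * τ ^ ρ)
      = ∫ τ in (0 : ℝ)..t, ∑' k, g c k τ := by simp only [g, mittagLeffler, tsum_mul_left]
    _ = ∑' k, ∫ τ in (0 : ℝ)..t, g c k τ := by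
        simp only [intervalIntegral.integral_of_le ht.le]
        exact (integral_tsum_of_summable_integral_norm hint hsum).symm
    _ = Gamma α * t ^ α * mittagLeffler₂ ρ (α + 1) (c * t ^ ρ) := by
        rw [tsum_congr (integral_sub_rpow_mul_pow_div_Gamma hρ0 hα ht c), tsum_mul_left]
        rfl

theorem mittagLeffler_solves_volterra_general (ρ lam : ℝ) (hρ1 : 1 < ρ) :
    (fun t : ℝ => mittagLeffler ρ (-lam * t ^ ρ)) 0 = 1 ∧
    ∀ t > (0:ℝ),
      HasDerivAt (fun t : ℝ => mittagLeffler ρ (-lam * t ^ ρ))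
        (-(lam / Real.Gamma (ρ - 1)) *
          ∫ τ in (0:ℝ)..t, (t - τ) ^ (ρ - 2) * mittagLeffler ρ (-lam * τ ^ ρ)) t := by
  refine ⟨by simp [zero_rpow (by positivity : ρ ≠ 0), mittagLeffler_zero], fun t ht => ?_⟩
  have hkernel := integral_sub_rpow_mul_mittagLeffler hρ1.le (α := ρ - 1) (by linarith) ht (-lam)
  rw [show ρ - 1 - 1 = ρ - 2 by ring, sub_add_cancel] at hkernel
  have hΓ : Gamma (ρ - 1) ≠ 0 := (Gamma_pos_of_pos (by linarith)).ne'
  rw [hkernel]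
  exact (hasDerivAt_mittagLeffler_mul_rpow hρ1.le (-lam) t).congr_deriv (by field_simp)

/-- For `ρ ∈ (1,2)` and `λ > 0`, `s(t) = E_ρ(−λ t^ρ)` satisfies
`s(0) = 1` and `s'(t) + (λ/Γ(ρ−1)) ∫₀ᵗ (t−τ)^{ρ−2} s(τ) dτ = 0` for `t > 0`. -/
theorem mittagLeffler_solves_volterra (ρ lam : ℝ) (hρ1 : 1 < ρ) (hρ2 : ρ < 2)
    (hlam : 0 < lam) :
    (fun t : ℝ => mittagLeffler ρ (-lam * t ^ ρ)) 0 = 1 ∧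
    ∀ t > (0:ℝ),
      HasDerivAt (fun t : ℝ => mittagLeffler ρ (-lam * t ^ ρ))
        (-(lam / Real.Gamma (ρ - 1)) *
          ∫ τ in (0:ℝ)..t, (t - τ) ^ (ρ - 2) * mittagLeffler ρ (-lam * τ ^ ρ)) t :=
  mittagLeffler_solves_volterra_general ρ lam hρ1
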